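/- arXiv:1802.06750 — 5 statements merged into one kernel-verified Lean document; each statement's English description precedes it below -/
import Mathlib

section
/- The ratio f(x) = g(x)/h(x), where g is nonnegative, concave and differentiable, and h is positive, convex and differentiable on a convex set C, is pseudoconcave on C: for all x, y in C, f(y) > f(x) implies ∇f(x)ᵀ(y - x) > 0. -/
/-!
Along the segment from `x` to `y`, concavity of `g` and convexity of `h` give the gradient
inequalities `g y - g x ≤ ∇g(x)ᵀ(y - x)` and `∇h(x)ᵀ(y - x) ≤ h y - h x`. Since `g x ≥ 0` and
`h x > 0`, the numerator of the quotient rule is then at least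
`(g y - g x) h x - g x (h y - h x) = g y h x - g x h y`, which is positive when `f x < f y`.
-/

open AffineMap

variable {E : Type*} [NormedAddCommGroup E] [NormedSpace ℝ E]

theorem DifferentiableAt.hasDerivAt_comp_lineMap {p : E → ℝ} {x y : E}
    (hp : DifferentiableAt ℝ p x) :
    HasDerivAt (p ∘ lineMap (k := ℝ) x y) (fderiv ℝ p x (y - x)) 0 :=
  hp.hasFDerivAt.comp_hasDerivAt_of_eq 0 hasDerivAt_lineMap (lineMap_apply_zero x y).symm

theorem ConvexOn.fderiv_apply_sub_le {p : E → ℝ} {C : Set E} (hpC : ConvexOn ℝ C p) {x y : E}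
    (hx : x ∈ C) (hy : y ∈ C) (hp : DifferentiableAt ℝ p x) :
    fderiv ℝ p x (y - x) ≤ p y - p x := by
  simpa [slope] using (hpC.comp_affineMap (lineMap x y)).le_slope_of_hasDerivAt
    (by simpa) (by simpa) zero_lt_one hp.hasDerivAt_comp_lineMap

theorem ConcaveOn.sub_le_fderiv_apply_sub {p : E → ℝ} {C : Set E} (hpC : ConcaveOn ℝ C p)
    {x y : E} (hx : x ∈ C) (hy : y ∈ C) (hp : DifferentiableAt ℝ p x) :
    p y - p x ≤ fderiv ℝ p x (y - x) := by
  simpa [slope] using (hpC.comp_affineMap (lineMap x y)).slope_le_of_hasDerivAt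
    (by simpa) (by simpa) zero_lt_one hp.hasDerivAt_comp_lineMap

theorem fderiv_div_apply {f g : E → ℝ} {x : E} (hf : DifferentiableAt ℝ f x)
    (hg : DifferentiableAt ℝ g x) (hx : g x ≠ 0) (v : E) :
    fderiv ℝ (fun z => f z / g z) x v =
      (fderiv ℝ f x v * g x - f x * fderiv ℝ g x v) / g x ^ 2 := by
  have hfg : DifferentiableAt ℝ (fun z => f z / g z) x := by fun_prop (disch := exact hx)
  have hline := (hf.hasFDerivAt.hasLineDerivAt v).div (hg.hasFDerivAt.hasLineDerivAt v) (by simpa)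
  simpa using (hfg.hasFDerivAt.hasLineDerivAt v).unique hline

theorem stmt_2_general {n : ℕ} (g h : (Fin n → ℝ) → ℝ) (U C : Set (Fin n → ℝ))
    (hCU : C ⊆ U)
    (hg : ∀ x ∈ U, DifferentiableAt ℝ g x) (hh : ∀ x ∈ U, DifferentiableAt ℝ h x)
    (hgnn : ∀ x ∈ C, 0 ≤ g x) (hgconc : ConcaveOn ℝ C g)
    (hhpos : ∀ x ∈ C, 0 < h x) (hhconv : ConvexOn ℝ C h) :
    ∀ x ∈ C, ∀ y ∈ C, g x / h x < g y / h y →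
      0 < fderiv ℝ (fun z => g z / h z) x (y - x) := by
  intro x hx y hy hlt
  have hgx := hg x (hCU hx)
  have hhx := hh x (hCU hx)
  have hgx_nonneg := hgnn x hx
  have hhx_pos := hhpos x hx
  have hcross : g x * h y < g y * h x := by
    rwa [div_lt_div_iff₀ hhx_pos (hhpos y hy)] at hlt
  rw [fderiv_div_apply hgx hhx hhx_pos.ne']
  refine div_pos ?_ (pow_pos hhx_pos 2)
  calc 0 < g y * h x - g x * h y := by linarith
    _ = (g y - g x) * h x - g x * (h y - h x) := by ring
    _ ≤ fderiv ℝ g x (y - x) * h x - g x * fderiv ℝ h x (y - x) := by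
      gcongr
      · exact hgconc.sub_le_fderiv_apply_sub hx hy hgx
      · exact hhconv.fderiv_apply_sub_le hx hy hhx

/-- The ratio f = g/h of a nonnegative concave differentiable function g and a positive
convex differentiable function h is pseudoconcave on a convex set C. -/
theorem stmt_2 {n : ℕ} (g h : (Fin n → ℝ) → ℝ) (U C : Set (Fin n → ℝ))
    (hUopen : IsOpen U) (hCU : C ⊆ U) (hCconv : Convex ℝ C)
    (hg : ∀ x ∈ U, DifferentiableAt ℝ g x) (hh : ∀ x ∈ U, DifferentiableAt ℝ h x)
    (hgnn : ∀ x ∈ C, 0 ≤ g x) (hgconc : ConcaveOn ℝ C g)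
    (hhpos : ∀ x ∈ C, 0 < h x) (hhconv : ConvexOn ℝ C h) :
    ∀ x ∈ C, ∀ y ∈ C, g x / h x < g y / h y →
      0 < fderiv ℝ (fun z => g z / h z) x (y - x) :=
  stmt_2_general g h U C hCU hg hh hgnn hgconc hhpos hhconv
end

section
/- Let g be concave and differentiable, h positive linear-plus-constant, and C a compact convex nonempty set. Define F(s) = max_{x ∈ C} (g(x) - s·h(x)). Then F is a decreasing convex function of s, and s* is the maximum of g/h over C if and only if F(s*) = 0. (Core correctness property of Dinkelbach's algorithm.) -/
/-!
Each `s ↦ g x - s * h x` is affine with slope `-h x < 0`, so their pointwise maximum `F` is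
strictly decreasing and convex. Since `h > 0` on `C`, `g x / h x ≤ s ↔ g x - s * h x ≤ 0` and
`g x / h x = s ↔ g x - s * h x = 0`; hence `s` is the maximum of `g / h` over `C` exactly when
`0` is the maximum of `g - s • h` over `C`, that is, when `F s = 0`.
-/

open Set

theorem ConvexOn.of_isGreatest_image {ι E : Type*} [AddCommMonoid E] [Module ℝ E]
    {s : Set E} {f : ι → E → ℝ} {I : Set ι} {F : E → ℝ} (hs : Convex ℝ s)
    (hf : ∀ i ∈ I, ConvexOn ℝ s (f i)) (hF : ∀ t ∈ s, IsGreatest ((fun i => f i t) '' I) (F t)) :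
    ConvexOn ℝ s F := by
  refine ⟨hs, fun x hx y hy a b ha hb hab => ?_⟩
  obtain ⟨⟨i, hi, hiF⟩, -⟩ := hF _ (hs hx hy ha hb hab)
  calc F (a • x + b • y) = f i (a • x + b • y) := hiF.symm
    _ ≤ a • f i x + b • f i y := (hf i hi).2 hx hy ha hb hab
    _ ≤ a • F x + b • F y := by
      gcongr
      · exact (hF x hx).2 (mem_image_of_mem _ hi)
      · exact (hF y hy).2 (mem_image_of_mem _ hi)

theorem convexOn_const_sub_mul (c d : ℝ) : ConvexOn ℝ univ (fun s : ℝ => c - s * d) :=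
  ⟨convex_univ, fun x _ y _ a b _ _ hab => le_of_eq <| by
    simp only [smul_eq_mul]; linear_combination (-c) * hab⟩

section Dinkelbach

variable {X : Type*} {g h : X → ℝ} {C : Set X} {F : ℝ → ℝ}

theorem strictAnti_of_isGreatest_sub_mul (hh : ∀ x ∈ C, 0 < h x)
    (hF : ∀ s, IsGreatest ((fun x => g x - s * h x) '' C) (F s)) : StrictAnti F := by
  intro s t hst
  obtain ⟨⟨x, hx, hxF⟩, -⟩ := hF t
  calc F t = g x - t * h x := hxF.symm
    _ < g x - s * h x := sub_lt_sub_left (mul_lt_mul_of_pos_right hst (hh x hx)) _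
    _ ≤ F s := (hF s).2 (mem_image_of_mem _ hx)

theorem convexOn_of_isGreatest_sub_mul
    (hF : ∀ s, IsGreatest ((fun x => g x - s * h x) '' C) (F s)) : ConvexOn ℝ univ F :=
  .of_isGreatest_image convex_univ (fun x _ => convexOn_const_sub_mul (g x) (h x))
    fun s _ => hF s

theorem isGreatest_div_image_iff (hh : ∀ x ∈ C, 0 < h x) (s : ℝ) :
    IsGreatest ((fun x => g x / h x) '' C) s ↔ IsGreatest ((fun x => g x - s * h x) '' C) 0 := by
  have hle : ∀ x ∈ C, g x / h x ≤ s ↔ g x - s * h x ≤ 0 := fun x hx => by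
    rw [div_le_iff₀ (hh x hx), sub_nonpos]
  have heq : ∀ x ∈ C, g x / h x = s ↔ g x - s * h x = 0 := fun x hx => by
    rw [div_eq_iff (hh x hx).ne', sub_eq_zero]
  simp only [IsGreatest, mem_upperBounds, forall_mem_image]
  exact and_congr (exists_congr fun x => and_congr_right fun hx => heq x hx)
    (forall₂_congr hle)

end Dinkelbach

theorem stmt_7_general {n : ℕ} (g h : (Fin n → ℝ) → ℝ) (C : Set (Fin n → ℝ))
    (hhpos : ∀ x ∈ C, 0 < h x)
    (F : ℝ → ℝ)
    (hF : ∀ s : ℝ, IsGreatest ((fun x => g x - s * h x) '' C) (F s)) :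
    StrictAnti F ∧ ConvexOn ℝ Set.univ F ∧
      ∀ s : ℝ, IsGreatest ((fun x => g x / h x) '' C) s ↔ F s = 0 :=
  ⟨strictAnti_of_isGreatest_sub_mul hhpos hF, convexOn_of_isGreatest_sub_mul hF, fun s =>
    (isGreatest_div_image_iff hhpos s).trans
      ⟨fun h0 => (hF s).unique h0, fun hFs => hFs ▸ hF s⟩⟩

/-- Core correctness property of Dinkelbach's algorithm: F(s) = max_{x∈C}(g(x) - s h(x))
is a strictly decreasing convex function of s, and s* is the maximum of g/h over C
iff F(s*) = 0. -/
theorem stmt_7 {n : ℕ} (g h : (Fin n → ℝ) → ℝ) (C : Set (Fin n → ℝ))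
    (hC : C.Nonempty) (hCcomp : IsCompact C) (hCconv : Convex ℝ C)
    (hgconc : ConcaveOn ℝ C g) (hgdiff : Differentiable ℝ g)
    (hhpos : ∀ x ∈ C, 0 < h x)
    (F : ℝ → ℝ)
    (hF : ∀ s : ℝ, IsGreatest ((fun x => g x - s * h x) '' C) (F s)) :
    StrictAnti F ∧ ConvexOn ℝ Set.univ F ∧
      ∀ s : ℝ, IsGreatest ((fun x => g x / h x) '' C) s ↔ F s = 0 :=
  stmt_7_general g h C hhpos F hF
end

section
/- In Dinkelbach's iteration s^{τ+1} = g(x(s^τ))/h(x(s^τ)) where x(s) maximizes g(x) - s·h(x) over a compact set C with h > 0 on C, the sequence {s^τ} is monotonically increasing (strictly, unless s^τ already equals the optimal ratio) and bounded above by s* = max_{x∈C} g(x)/h(x). -/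
/-!
If `x` maximizes `g - s * h` on `C` and some `y ∈ C` has ratio `g y / h y ≥ s`, then
`g x - s h x ≥ g y - s h y = h y (g y / h y - s) ≥ 0`, so the ratio at `x` is again `≥ s`, strictly
if the ratio at `y` is `> s`. Applied with `y` a maximizer of `g / h`, this gives monotonicity and
strictness below `s*`; the bound `s^τ ≤ s*` holds because every `s^{τ+1}` is a ratio at a point of `C`.
-/

section Dinkelbach

variable {α : Type*} {g h : α → ℝ} {C : Set α} {s : ℝ} {x y : α}

theorem le_div_of_isMaxOn_sub_mul (hmax : IsMaxOn (fun z => g z - s * h z) C x)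
    (hx : 0 < h x) (hy : y ∈ C) (hhy : 0 < h y) (hs : s ≤ g y / h y) : s ≤ g x / h x := by
  have hmax_y : g y - s * h y ≤ g x - s * h x := hmax hy
  rw [le_div_iff₀ hhy] at hs
  rw [le_div_iff₀ hx]
  linarith

theorem lt_div_of_isMaxOn_sub_mul (hmax : IsMaxOn (fun z => g z - s * h z) C x)
    (hx : 0 < h x) (hy : y ∈ C) (hhy : 0 < h y) (hs : s < g y / h y) : s < g x / h x := by
  have hmax_y : g y - s * h y ≤ g x - s * h x := hmax hy
  rw [lt_div_iff₀ hhy] at hs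
  rw [lt_div_iff₀ hx]
  linarith

end Dinkelbach

theorem stmt_8_general {n : ℕ} (g h : (Fin n → ℝ) → ℝ) (C : Set (Fin n → ℝ))
    (hhpos : ∀ x ∈ C, 0 < h x)
    (sstar : ℝ) (hstar : IsGreatest ((fun x => g x / h x) '' C) sstar)
    (xm : ℝ → (Fin n → ℝ))
    (hxm : ∀ s : ℝ, xm s ∈ C ∧ ∀ y ∈ C, g y - s * h y ≤ g (xm s) - s * h (xm s))
    (s : ℕ → ℝ) (hs0 : s 0 ≤ sstar)
    (hiter : ∀ τ : ℕ, s (τ + 1) = g (xm (s τ)) / h (xm (s τ))) :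
    (∀ τ, s τ ≤ s (τ + 1)) ∧ (∀ τ, s τ ≠ sstar → s τ < s (τ + 1)) ∧
      (∀ τ, s τ ≤ sstar) := by
  obtain ⟨⟨ystar, hystar, rfl⟩, hub⟩ := hstar
  have hmax (t : ℝ) : IsMaxOn (fun z => g z - t * h z) C (xm t) := isMaxOn_iff.mpr (hxm t).2
  have hpos (t : ℝ) : 0 < h (xm t) := hhpos _ (hxm t).1
  have hbound : ∀ τ, s τ ≤ g ystar / h ystar
    | 0 => hs0
    | τ + 1 => hiter τ ▸ hub ⟨xm (s τ), (hxm (s τ)).1, rfl⟩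
  refine ⟨fun τ => ?_, fun τ hne => ?_, hbound⟩
  · rw [hiter τ]
    exact le_div_of_isMaxOn_sub_mul (hmax _) (hpos _) hystar (hhpos _ hystar) (hbound τ)
  · rw [hiter τ]
    exact lt_div_of_isMaxOn_sub_mul (hmax _) (hpos _) hystar (hhpos _ hystar)
      ((hbound τ).lt_of_ne hne)

/-- Dinkelbach's iteration produces a monotonically increasing sequence (strictly,
unless it already equals the optimal ratio) bounded above by s* = max_{x∈C} g/h. -/
theorem stmt_8 {n : ℕ} (g h : (Fin n → ℝ) → ℝ) (C : Set (Fin n → ℝ))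
    (hC : C.Nonempty) (hCcomp : IsCompact C)
    (hg : ContinuousOn g C) (hh : ContinuousOn h C)
    (hhpos : ∀ x ∈ C, 0 < h x)
    (sstar : ℝ) (hstar : IsGreatest ((fun x => g x / h x) '' C) sstar)
    (xm : ℝ → (Fin n → ℝ))
    (hxm : ∀ s : ℝ, xm s ∈ C ∧ ∀ y ∈ C, g y - s * h y ≤ g (xm s) - s * h (xm s))
    (s : ℕ → ℝ) (hs0 : s 0 ≤ sstar)
    (hiter : ∀ τ : ℕ, s (τ + 1) = g (xm (s τ)) / h (xm (s τ))) :
    (∀ τ, s τ ≤ s (τ + 1)) ∧ (∀ τ, s τ ≠ sstar → s τ < s (τ + 1)) ∧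
      (∀ τ, s τ ≤ sstar) :=
  stmt_8_general g h C hhpos sstar hstar xm hxm s hs0 hiter
end

section
/- Equal-gradient surrogate gives stationarity equivalence: let C ⊆ ℝⁿ be convex, f differentiable, and for each x ∈ C let f̃(·; x) be a differentiable pseudoconcave function on C with ∇f̃(x; x) = ∇f(x). Then x is a stationary point of max_{y∈C} f(y) (i.e., ∇f(x)ᵀ(y - x) ≤ 0 for all y ∈ C) if and only if x is a global maximizer of f̃(·; x) over C. -/
variable {E : Type*} [NormedAddCommGroup E] [NormedSpace ℝ E] {g : E → ℝ} {C : Set E} {x : E}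

theorem IsMaxOn.fderiv_sub_nonpos_of_convex (hC : Convex ℝ C) (hg : DifferentiableAt ℝ g x)
    (hx : x ∈ C) (hmax : IsMaxOn g C x) {y : E} (hy : y ∈ C) :
    fderiv ℝ g x (y - x) ≤ 0 :=
  hmax.localize.hasFDerivWithinAt_nonpos hg.hasFDerivAt.hasFDerivWithinAt
    (sub_mem_posTangentConeAt_of_segment_subset (hC.segment_subset hx hy))

theorem Convex.forall_fderiv_sub_nonpos_iff_isMaxOn (hC : Convex ℝ C)
    (hg : DifferentiableAt ℝ g x) (hx : x ∈ C)
    (hpc : ∀ y ∈ C, g x < g y → 0 < fderiv ℝ g x (y - x)) :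
    (∀ y ∈ C, fderiv ℝ g x (y - x) ≤ 0) ↔ IsMaxOn g C x :=
  ⟨fun hstat y hy => not_lt.mp fun hlt => (hpc y hy hlt).not_ge (hstat y hy),
    fun hmax _ hy => hmax.fderiv_sub_nonpos_of_convex hC hg hx hy⟩

theorem stmt_12_general {n : ℕ} (C : Set (Fin n → ℝ)) (hCconv : Convex ℝ C)
    (f : (Fin n → ℝ) → ℝ)
    (ft : (Fin n → ℝ) → (Fin n → ℝ) → ℝ)
    (hftd : ∀ x ∈ C, Differentiable ℝ (fun w => ft w x))
    (hpc : ∀ x ∈ C, ∀ y ∈ C, ∀ z ∈ C,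
      ft z x < ft y x → 0 < fderiv ℝ (fun w => ft w x) z (y - z))
    (hgrad : ∀ x ∈ C, fderiv ℝ (fun w => ft w x) x = fderiv ℝ f x) :
    ∀ x ∈ C, ((∀ y ∈ C, fderiv ℝ f x (y - x) ≤ 0) ↔ (∀ y ∈ C, ft y x ≤ ft x x)) := by
  intro x hx
  rw [← hgrad x hx]
  exact (hCconv.forall_fderiv_sub_nonpos_iff_isMaxOn (hftd x hx x) hx
    fun y hy => hpc x hx y hy x hx).trans isMaxOn_iff

/-- Equal-gradient pseudoconcave surrogates give stationarity equivalence: x is a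
stationary point of max_{C} f iff x globally maximizes the surrogate f̃(·;x) over C. -/
theorem stmt_12 {n : ℕ} (C : Set (Fin n → ℝ)) (hCconv : Convex ℝ C)
    (f : (Fin n → ℝ) → ℝ) (hf : Differentiable ℝ f)
    (ft : (Fin n → ℝ) → (Fin n → ℝ) → ℝ)
    (hftd : ∀ x ∈ C, Differentiable ℝ (fun w => ft w x))
    (hpc : ∀ x ∈ C, ∀ y ∈ C, ∀ z ∈ C,
      ft z x < ft y x → 0 < fderiv ℝ (fun w => ft w x) z (y - z))
    (hgrad : ∀ x ∈ C, fderiv ℝ (fun w => ft w x) x = fderiv ℝ f x) :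
    ∀ x ∈ C, ((∀ y ∈ C, fderiv ℝ f x (y - x) ≤ 0) ↔ (∀ y ∈ C, ft y x ≤ ft x x)) :=
  stmt_12_general C hCconv f ft hftd hpc hgrad
end

section
/- Strict monotonicity of Dinkelbach update below the optimum: let g be continuous, h continuous and positive on a nonempty compact set C, s* = max_{x∈C} g(x)/h(x), and for s < s* let x(s) ∈ argmax_{x∈C}(g(x) - s·h(x)). Then g(x(s)) - s·h(x(s)) > 0 and the update s' = g(x(s))/h(x(s)) satisfies s < s' ≤ s*. -/
theorem lt_div_iff_sub_mul_pos {a b s : ℝ} (hb : 0 < b) : s < a / b ↔ 0 < a - s * b := by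
  rw [lt_div_iff₀ hb, sub_pos]

theorem sub_mul_pos_of_isMaxOn_of_lt_div {α : Type*} {g h : α → ℝ} {C : Set α} {s : ℝ}
    {x₀ xs : α} (hx₀ : x₀ ∈ C) (hh₀ : 0 < h x₀) (hs : s < g x₀ / h x₀)
    (hmax : IsMaxOn (fun y => g y - s * h y) C xs) : 0 < g xs - s * h xs :=
  ((lt_div_iff_sub_mul_pos hh₀).1 hs).trans_le (hmax hx₀)

theorem stmt_19_general {n : ℕ} (g h : (Fin n → ℝ) → ℝ) (C : Set (Fin n → ℝ))
    (hhpos : ∀ x ∈ C, 0 < h x)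
    (sstar : ℝ) (hstar : IsGreatest ((fun x => g x / h x) '' C) sstar)
    (s : ℝ) (hs : s < sstar)
    (xs : Fin n → ℝ) (hxs : xs ∈ C)
    (hmax : ∀ y ∈ C, g y - s * h y ≤ g xs - s * h xs) :
    0 < g xs - s * h xs ∧ s < g xs / h xs ∧ g xs / h xs ≤ sstar := by
  obtain ⟨x₀, hx₀, rfl⟩ := hstar.1
  have hpos : 0 < g xs - s * h xs :=
    sub_mul_pos_of_isMaxOn_of_lt_div hx₀ (hhpos x₀ hx₀) hs hmax
  exact ⟨hpos, (lt_div_iff_sub_mul_pos (hhpos xs hxs)).2 hpos, hstar.2 ⟨xs, hxs, rfl⟩⟩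

/-- Strict monotonicity of the Dinkelbach update below the optimum: if s < s*, the
maximizer x(s) of g - s·h has positive parametric value and the updated ratio lies
strictly above s and at most s*. -/
theorem stmt_19 {n : ℕ} (g h : (Fin n → ℝ) → ℝ) (C : Set (Fin n → ℝ))
    (hC : C.Nonempty) (hCcomp : IsCompact C)
    (hg : Continuous g) (hh : Continuous h)
    (hhpos : ∀ x ∈ C, 0 < h x)
    (sstar : ℝ) (hstar : IsGreatest ((fun x => g x / h x) '' C) sstar)
    (s : ℝ) (hs : s < sstar)
    (xs : Fin n → ℝ) (hxs : xs ∈ C)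
    (hmax : ∀ y ∈ C, g y - s * h y ≤ g xs - s * h xs) :
    0 < g xs - s * h xs ∧ s < g xs / h xs ∧ g xs / h xs ≤ sstar :=
  stmt_19_general g h C hhpos sstar hstar s hs xs hxs hmax
end
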